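/- For every α ∈ (0, ∞) and every t ∈ (0, 1), the function η(t) = t·(2 + (6α−3)t + 4(α²−α)t²)/((1 − t + αt)²(1 + αt)²) + 2·log(1 − t/(1 + αt)) has derivative η'(t) = −t²(1 + 3(1 − 2α + 2(α − α²)t)²)/(2(1 − t + αt)³(1 + αt)³); in particular η'(t) < 0, so η is strictly decreasing on (0,1). -/

import Mathlib

/-!
Since `1 - t / (1 + α t) = (1 - t + α t) / (1 + α t)`, the logarithmic term of `η` has derivative
`-1 / ((1 - t + α t) (1 + α t))`; together with the quotient rule for the rational term this gives
`η'` after clearing denominators. For `α > 0` and `0 < t < 1` both linear factors are positive, so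
`η' < 0` and the mean value theorem makes `η` strictly decreasing.
-/

/-- The function `η` from the paper, for a parameter `α`. -/
noncomputable def eta (α t : ℝ) : ℝ :=
  t * (2 + (6 * α - 3) * t + 4 * (α ^ 2 - α) * t ^ 2) /
      ((1 - t + α * t) ^ 2 * (1 + α * t) ^ 2) +
    2 * Real.log (1 - t / (1 + α * t))

open Set

noncomputable def etaDeriv (α t : ℝ) : ℝ :=
  -(t ^ 2 * (1 + 3 * (1 - 2 * α + 2 * (α - α ^ 2) * t) ^ 2)) /
    (2 * (1 - t + α * t) ^ 3 * (1 + α * t) ^ 3)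

section

variable {α t : ℝ}

lemma one_sub_div_one_add_mul (hB : 1 + α * t ≠ 0) :
    1 - t / (1 + α * t) = (1 - t + α * t) / (1 + α * t) := by
  rw [eq_div_iff hB, sub_mul, div_mul_cancel₀ _ hB]
  ring

lemma hasDerivAt_log_one_sub_div (hA : 1 - t + α * t ≠ 0) (hB : 1 + α * t ≠ 0) :
    HasDerivAt (fun s => Real.log (1 - s / (1 + α * s)))
      (-1 / ((1 - t + α * t) * (1 + α * t))) t := by
  have hq : HasDerivAt (fun s => 1 - s / (1 + α * s))
      (-1 / (1 + α * t) ^ 2) t := by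
    have hB' : HasDerivAt (fun s => 1 + α * s) α t := by
      simpa using ((hasDerivAt_id t).const_mul α).const_add 1
    refine (((hasDerivAt_id t).div hB' hB).const_sub 1).congr_deriv ?_
    simp only [id]
    field_simp
    ring
  have hu : 1 - t / (1 + α * t) ≠ 0 := by
    rw [one_sub_div_one_add_mul hB]; exact div_ne_zero hA hB
  convert hq.log hu using 1
  rw [one_sub_div_one_add_mul hB]
  field_simp

lemma hasDerivAt_eta (hA : 1 - t + α * t ≠ 0) (hB : 1 + α * t ≠ 0) :
    HasDerivAt (eta α) (etaDeriv α t) t := by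
  have hN : HasDerivAt (fun s => s * (2 + (6 * α - 3) * s + 4 * (α ^ 2 - α) * s ^ 2))
      (2 + 2 * (6 * α - 3) * t + 12 * (α ^ 2 - α) * t ^ 2) t :=
    ((hasDerivAt_id t).mul ((((hasDerivAt_id t).const_mul (6 * α - 3)).const_add 2).add
      ((hasDerivAt_pow 2 t).const_mul (4 * (α ^ 2 - α))))).congr_deriv (by
        simp only [id_eq, Pi.add_apply, one_mul, mul_one, Nat.cast_ofNat, Nat.add_one_sub_one, pow_one]
        ring)
  have hA' : HasDerivAt (fun s => 1 - s + α * s) (α - 1) t :=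
    (((hasDerivAt_id t).const_sub 1).add ((hasDerivAt_id t).const_mul α)).congr_deriv (by ring)
  have hB' : HasDerivAt (fun s => 1 + α * s) α t :=
    (((hasDerivAt_id t).const_mul α).const_add 1).congr_deriv (by ring)
  have hD0 : (1 - t + α * t) ^ 2 * (1 + α * t) ^ 2 ≠ 0 := by positivity
  refine ((hN.div ((hA'.pow 2).mul (hB'.pow 2)) hD0).add
    ((hasDerivAt_log_one_sub_div hA hB).const_mul 2)).congr_deriv ?_
  simp only [Pi.mul_apply, Pi.pow_apply, etaDeriv]
  field_simp
  ring

lemma etaDeriv_neg (ht : t ≠ 0) (hA : 0 < 1 - t + α * t) (hB : 0 < 1 + α * t) :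
    etaDeriv α t < 0 := by
  unfold etaDeriv
  apply div_neg_of_neg_of_pos _ (by positivity)
  rw [neg_neg_iff_pos]
  positivity

end

theorem eta_deriv (α : ℝ) (hα : α ∈ Set.Ioi (0:ℝ)) :
    (∀ t ∈ Set.Ioo (0:ℝ) 1,
        HasDerivAt (eta α)
          (-(t ^ 2 * (1 + 3 * (1 - 2 * α + 2 * (α - α ^ 2) * t) ^ 2)) /
            (2 * (1 - t + α * t) ^ 3 * (1 + α * t) ^ 3)) t) ∧
      (∀ t ∈ Set.Ioo (0:ℝ) 1,
        -(t ^ 2 * (1 + 3 * (1 - 2 * α + 2 * (α - α ^ 2) * t) ^ 2)) /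
            (2 * (1 - t + α * t) ^ 3 * (1 + α * t) ^ 3) < 0) ∧
      StrictAntiOn (eta α) (Set.Ioo (0:ℝ) 1) := by
  have hpos : ∀ t ∈ Ioo (0:ℝ) 1, 0 < 1 - t + α * t ∧ 0 < 1 + α * t := fun t ⟨ht0, ht1⟩ =>
    have : 0 < α * t := mul_pos hα ht0
    ⟨by linarith, by linarith⟩
  have hderiv : ∀ t ∈ Ioo (0:ℝ) 1, HasDerivAt (eta α) (etaDeriv α t) t := fun t ht =>
    hasDerivAt_eta (hpos t ht).1.ne' (hpos t ht).2.ne'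
  have hneg : ∀ t ∈ Ioo (0:ℝ) 1, etaDeriv α t < 0 := fun t ht =>
    etaDeriv_neg ht.1.ne' (hpos t ht).1 (hpos t ht).2
  refine ⟨hderiv, hneg, strictAntiOn_of_hasDerivWithinAt_neg (convex_Ioo 0 1)
    (HasDerivAt.continuousOn hderiv) (fun t ht => ?_) (fun t ht => hneg t ?_)⟩
  · rw [interior_Ioo] at ht ⊢
    exact (hderiv t ht).hasDerivWithinAt
  · rwa [interior_Ioo] at ht
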